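/- arXiv:2312.17059 — 3 statements merged into one kernel-verified Lean document; each statement's English description precedes it below -/
import Mathlib

section
/- Under the full setup, the exponent h_1 in Φ_{ℓ^3}(q_4) = ℓ·q_1^{h_1} satisfies h_1 ≥ ℓ. -/
/-!
Reduce everything modulo `q₃`. Since `q₃ ∣ Φ_ℓ(q₁)` and `q₃ ≠ ℓ`, the residue of `q₁` is a primitive
`ℓ`-th root of unity. Since `q₃` divides `Φ_ℓ(q₄)` or `Φ_{ℓ²}(q₄)`, the residue `y` of `q₄` satisfies
`y^{ℓ²} = 1`, so `Φ_{ℓ³}(q₄) = Σ_{i<ℓ} (y^{ℓ²})^i ≡ ℓ`. Cancelling the unit `ℓ` in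
`ℓ ≡ ℓ·q₁^{h₁}` gives `q₁^{h₁} ≡ 1`, hence `ℓ ∣ h₁`.
-/

open Finset

noncomputable def Phi (d : ℕ) (x : ℤ) : ℤ := (Polynomial.cyclotomic d ℤ).eval x

open Polynomial

theorem Int.cast_Phi {R : Type*} [CommRing R] (d : ℕ) (x : ℤ) :
    ((Phi d x : ℤ) : R) = (cyclotomic d R).eval (x : R) := by
  rw [Phi, ← map_cyclotomic_int d R, eval_intCast_map, eq_intCast, Int.cast_id]

theorem isRoot_cyclotomic_zmod_of_dvd_Phi {q d : ℕ} {x : ℤ} (h : (q : ℤ) ∣ Phi d x) :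
    (cyclotomic d (ZMod q)).IsRoot (x : ZMod q) := by
  rw [IsRoot, ← Int.cast_Phi, ZMod.intCast_zmod_eq_zero_iff_dvd]
  exact h

theorem pow_eq_one_of_isRoot_cyclotomic {R : Type*} [CommRing R] {n : ℕ} {x : R}
    (h : (cyclotomic n R).IsRoot x) : x ^ n = 1 := by
  obtain ⟨g, hg⟩ := cyclotomic.dvd_X_pow_sub_one n R
  have := congrArg (eval x) hg
  rw [eval_sub, eval_pow, eval_X, eval_one, eval_mul, h.eq_zero, zero_mul] at this
  exact sub_eq_zero.mp this

theorem eval_cyclotomic_prime_pow_succ_of_pow_eq_one {R : Type*} [CommRing R] {p n : ℕ}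
    (hp : p.Prime) {y : R} (hy : y ^ p ^ n = 1) : (cyclotomic (p ^ (n + 1)) R).eval y = p := by
  simp [cyclotomic_prime_pow_eq_geom_sum hp, eval_finsetSum, hy]

theorem h1_ge_ell_general
    (p s : ℕ) (q : Fin s → ℕ)
    (hp : p.Prime)
    (hq : ∀ i, (q i).Prime)
    (hpq : ∀ i, p ≠ q i)
    (i₁ i₂ i₃ i₄ : Fin s)
    (h₁ : ℕ) (hh₁ : 0 < h₁)
    (hΦ3 : Phi (p ^ 3) (q i₄) = p * (q i₁ : ℤ) ^ h₁)
    (hΦ12 : ∃ h₂ h₃ : ℕ, 0 < h₂ ∧ 0 < h₃ ∧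
      ((Phi p (q i₄) = p * (q i₂ : ℤ) ^ h₂ ∧ Phi (p ^ 2) (q i₄) = p * (q i₃ : ℤ) ^ h₃) ∨
       (Phi p (q i₄) = p * (q i₃ : ℤ) ^ h₃ ∧ Phi (p ^ 2) (q i₄) = p * (q i₂ : ℤ) ^ h₂)))
    (e₃ : ℕ) (he₃ : 0 < e₃)
    (hA : Phi p (q i₁) = p * (q i₃ : ℤ) ^ e₃)
    :
    p ≤ h₁ := by
  obtain ⟨h₂, h₃, -, hh₃, hcase⟩ := hΦ12
  have := Fact.mk (hq i₃)
  have hpK : (p : ZMod (q i₃)) ≠ 0 := by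
    rw [Ne, ZMod.natCast_eq_zero_iff, Nat.prime_dvd_prime_iff_eq (hq i₃) hp]
    exact (hpq i₃).symm
  have : NeZero (p : ZMod (q i₃)) := ⟨hpK⟩
  have q₃_dvd {d : ℕ} {x m : ℤ} {e : ℕ} (h : Phi d x = m * (q i₃ : ℤ) ^ e) (he : 0 < e) :
      (q i₃ : ℤ) ∣ Phi d x :=
    h ▸ dvd_mul_of_dvd_right (dvd_pow_self _ he.ne') _
  have hx : IsPrimitiveRoot ((q i₁ : ℤ) : ZMod (q i₃)) p :=
    isRoot_cyclotomic_iff.mp (isRoot_cyclotomic_zmod_of_dvd_Phi (q₃_dvd hA he₃))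
  have hy : ((q i₄ : ℤ) : ZMod (q i₃)) ^ p ^ 2 = 1 := by
    rcases hcase with ⟨-, h⟩ | ⟨h, -⟩
    · exact pow_eq_one_of_isRoot_cyclotomic (isRoot_cyclotomic_zmod_of_dvd_Phi (q₃_dvd h hh₃))
    · rw [sq, pow_mul, pow_eq_one_of_isRoot_cyclotomic
        (isRoot_cyclotomic_zmod_of_dvd_Phi (q₃_dvd h hh₃)), one_pow]
  have hΦ3K := congrArg (Int.cast : ℤ → ZMod (q i₃)) hΦ3
  rw [Int.cast_Phi, eval_cyclotomic_prime_pow_succ_of_pow_eq_one hp hy, Int.cast_mul,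
    Int.cast_pow, Int.cast_natCast] at hΦ3K
  have hxh : ((q i₁ : ℤ) : ZMod (q i₃)) ^ h₁ = 1 :=
    (mul_right_eq_self₀.mp hΦ3K.symm).resolve_right hpK
  exact Nat.le_of_dvd hh₁ (hx.dvd_of_pow_eq_one h₁ hxh)

theorem h1_ge_ell
    (N p α s : ℕ) (q β : Fin s → ℕ)
    (hN : N = p ^ α * ∏ i, q i ^ (2 * β i))
    (hodd : Odd N)
    (hperf : ArithmeticFunction.sigma 1 N = 2 * N)
    (hp : p.Prime) (hpodd : Odd p)
    (hq : ∀ i, (q i).Prime) (hqodd : ∀ i, Odd (q i))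
    (hinj : Function.Injective q)
    (hpq : ∀ i, p ≠ q i)
    (hα4 : α % 4 = 1) (hp4 : p % 4 = 1)
    (hαpos : 0 < α) (hβpos : ∀ i, 0 < β i)
    (hk : ∀ i, p ^ 2 ∣ 2 * β i + 1)
    (hnd : ¬ p ^ 10 ∣ N)
    (i₁ i₂ i₃ i₄ : Fin s)
    (hij : i₁ ≠ i₂ ∧ i₁ ≠ i₃ ∧ i₁ ≠ i₄ ∧ i₂ ≠ i₃ ∧ i₂ ≠ i₄ ∧ i₃ ≠ i₄)
    (hS : ∀ i, q i ≡ 1 [MOD p] ↔ i ∈ ({i₁, i₂, i₃, i₄} : Finset (Fin s)))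
    (hβ1 : 2 * β i₁ + 1 = p ^ 2) (hβ2 : 2 * β i₂ + 1 = p ^ 2)
    (hβ3 : 2 * β i₃ + 1 = p ^ 2) (hβ4 : 2 * β i₄ + 1 = p ^ 3)
    (h₁ : ℕ) (hh₁ : 0 < h₁)
    (hΦ3 : Phi (p ^ 3) (q i₄) = p * (q i₁ : ℤ) ^ h₁)
    (hΦ12 : ∃ h₂ h₃ : ℕ, 0 < h₂ ∧ 0 < h₃ ∧
      ((Phi p (q i₄) = p * (q i₂ : ℤ) ^ h₂ ∧ Phi (p ^ 2) (q i₄) = p * (q i₃ : ℤ) ^ h₃) ∨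
       (Phi p (q i₄) = p * (q i₃ : ℤ) ^ h₃ ∧ Phi (p ^ 2) (q i₄) = p * (q i₂ : ℤ) ^ h₂)))
    (e₂ e₃ e₄ : ℕ) (he₂ : 0 < e₂) (he₃ : 0 < e₃) (he₄ : 0 < e₄) (hℓe₄ : p ∣ e₄)
    (hA : Phi p (q i₁) = p * (q i₃ : ℤ) ^ e₃)
    (hB : Phi (p ^ 2) (q i₁) = p * (q i₂ : ℤ) ^ e₂ * (q i₄ : ℤ) ^ e₄)
    (f₁ : ℕ) (hf₁ : 0 < f₁)
    (hC : Phi p (q i₂) = p * (q i₁ : ℤ) ^ f₁)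
    :
    p ≤ h₁ :=
  h1_ge_ell_general p s q hp hq hpq i₁ i₂ i₃ i₄ h₁ hh₁ hΦ3 hΦ12 e₃ he₃ hA
end

section
/- Under the full setup, the exponent f_1 in Φ_ℓ(q_2) = ℓ·q_1^{f_1} satisfies f_1 ≥ ℓ − 3; that is, the assumption f_1 ≤ ℓ − 4 leads to a contradiction. -/
open Finset

private lemma geom_lower {y : ℤ} (hy : 0 ≤ y) (k : ℕ) (hk : 1 ≤ k) :
    y ^ k + 1 ≤ ∑ i ∈ Finset.range (k + 1), y ^ i := by
  rw [Finset.sum_range_succ]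
  have h0 : (1 : ℤ) ≤ ∑ i ∈ Finset.range k, y ^ i := by
    have h := Finset.single_le_sum (f := fun i => y ^ i)
      (fun i _ => pow_nonneg hy i) (Finset.mem_range.mpr (show 0 < k by omega))
    simpa using h
  linarith

private lemma Phi_prime_eval (p : ℕ) (hp : p.Prime) (x : ℤ) :
    Phi p x = ∑ i ∈ Finset.range p, x ^ i := by
  haveI := Fact.mk hp
  rw [Phi, Polynomial.cyclotomic_prime, Polynomial.eval_finset_sum]
  simp

private lemma Phi_prime_pow_eval (p n : ℕ) (hp : p.Prime) (x : ℤ) :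
    Phi (p ^ (n + 1)) x = ∑ i ∈ Finset.range p, (x ^ p ^ n) ^ i := by
  rw [Phi, Polynomial.cyclotomic_prime_pow_eq_geom_sum hp, Polynomial.eval_finset_sum]
  simp

private lemma prod_phi_eval (p k : ℕ) (hp : p.Prime) (x : ℤ) :
    ∏ i ∈ Finset.range (k + 1), Phi (p ^ i) x = x ^ (p ^ k) - 1 := by
  have h := congrArg (Polynomial.eval x)
    (Polynomial.prod_cyclotomic_eq_X_pow_sub_one (pow_pos hp.pos k) ℤ)
  rw [Polynomial.eval_prod, Nat.prod_divisors_prime_pow hp] at h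
  simpa [Phi] using h

private lemma geom_eq_phi_sq (p : ℕ) (hp : p.Prime) {x : ℤ} (hx : 2 ≤ x) :
    (∑ i ∈ Finset.range (p ^ 2), x ^ i) = Phi p x * Phi (p ^ 2) x := by
  have h1 : (x - 1) * (Phi p x * Phi (p ^ 2) x) = x ^ (p ^ 2) - 1 := by
    have h := prod_phi_eval p 2 hp x
    rw [Finset.prod_range_succ, Finset.prod_range_succ, Finset.prod_range_one] at h
    have h0 : Phi (p ^ 0) x = x - 1 := by
      simp [Phi, pow_zero, Polynomial.cyclotomic_one]
    rw [h0, pow_one] at h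
    rw [← h]; ring
  have h2 : (x - 1) * (∑ i ∈ Finset.range (p ^ 2), x ^ i) = x ^ (p ^ 2) - 1 := by
    rw [mul_comm, geom_sum_mul]
  have hx1 : x - 1 ≠ 0 := by intro h; omega
  exact mul_left_cancel₀ hx1 (h2.trans h1.symm)

private lemma geom_eq_phi_cube (p : ℕ) (hp : p.Prime) {x : ℤ} (hx : 2 ≤ x) :
    (∑ i ∈ Finset.range (p ^ 3), x ^ i) = Phi p x * Phi (p ^ 2) x * Phi (p ^ 3) x := by
  have h1 : (x - 1) * (Phi p x * Phi (p ^ 2) x * Phi (p ^ 3) x) = x ^ (p ^ 3) - 1 := by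
    have h := prod_phi_eval p 3 hp x
    rw [Finset.prod_range_succ, Finset.prod_range_succ, Finset.prod_range_succ,
      Finset.prod_range_one] at h
    have h0 : Phi (p ^ 0) x = x - 1 := by
      simp [Phi, pow_zero, Polynomial.cyclotomic_one]
    rw [h0, pow_one] at h
    rw [← h]; ring
  have h2 : (x - 1) * (∑ i ∈ Finset.range (p ^ 3), x ^ i) = x ^ (p ^ 3) - 1 := by
    rw [mul_comm, geom_sum_mul]
  have hx1 : x - 1 ≠ 0 := by intro h; omega
  exact mul_left_cancel₀ hx1 (h2.trans h1.symm)

theorem f1_ge_ell_sub_three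
    (N p α s : ℕ) (q β : Fin s → ℕ)
    (hN : N = p ^ α * ∏ i, q i ^ (2 * β i))
    (hodd : Odd N)
    (hperf : ArithmeticFunction.sigma 1 N = 2 * N)
    (hp : p.Prime) (hpodd : Odd p)
    (hq : ∀ i, (q i).Prime) (hqodd : ∀ i, Odd (q i))
    (hinj : Function.Injective q)
    (hpq : ∀ i, p ≠ q i)
    (hα4 : α % 4 = 1) (hp4 : p % 4 = 1)
    (hαpos : 0 < α) (hβpos : ∀ i, 0 < β i)
    (hk : ∀ i, p ^ 2 ∣ 2 * β i + 1)
    (hnd : ¬ p ^ 10 ∣ N)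
    (i₁ i₂ i₃ i₄ : Fin s)
    (hij : i₁ ≠ i₂ ∧ i₁ ≠ i₃ ∧ i₁ ≠ i₄ ∧ i₂ ≠ i₃ ∧ i₂ ≠ i₄ ∧ i₃ ≠ i₄)
    (hS : ∀ i, q i ≡ 1 [MOD p] ↔ i ∈ ({i₁, i₂, i₃, i₄} : Finset (Fin s)))
    (hβ1 : 2 * β i₁ + 1 = p ^ 2) (hβ2 : 2 * β i₂ + 1 = p ^ 2)
    (hβ3 : 2 * β i₃ + 1 = p ^ 2) (hβ4 : 2 * β i₄ + 1 = p ^ 3)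
    (h₁ : ℕ) (hh₁ : 0 < h₁)
    (hΦ3 : Phi (p ^ 3) (q i₄) = p * (q i₁ : ℤ) ^ h₁)
    (hΦ12 : ∃ h₂ h₃ : ℕ, 0 < h₂ ∧ 0 < h₃ ∧
      ((Phi p (q i₄) = p * (q i₂ : ℤ) ^ h₂ ∧ Phi (p ^ 2) (q i₄) = p * (q i₃ : ℤ) ^ h₃) ∨
       (Phi p (q i₄) = p * (q i₃ : ℤ) ^ h₃ ∧ Phi (p ^ 2) (q i₄) = p * (q i₂ : ℤ) ^ h₂)))
    (e₂ e₃ e₄ : ℕ) (he₂ : 0 < e₂) (he₃ : 0 < e₃) (he₄ : 0 < e₄) (hℓe₄ : p ∣ e₄)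
    (hA : Phi p (q i₁) = p * (q i₃ : ℤ) ^ e₃)
    (hB : Phi (p ^ 2) (q i₁) = p * (q i₂ : ℤ) ^ e₂ * (q i₄ : ℤ) ^ e₄)
    (f₁ : ℕ) (hf₁ : 0 < f₁)
    (hC : Phi p (q i₂) = p * (q i₁ : ℤ) ^ f₁)
    (hh₁ℓ : p ≤ h₁) :
    p - 3 ≤ f₁ := by
  -- p ≥ 5
  have hp2 : 2 ≤ p := hp.two_le
  have hp5 : 5 ≤ p := by
    by_contra hcon5
    interval_cases p <;> omega
  by_contra hcon
  -- write p = m + 5 (keeping p opaque)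
  obtain ⟨m, hpdef⟩ : ∃ m, p = m + 5 := ⟨p - 5, by omega⟩
  have hf14 : f₁ ≤ m + 1 := by omega
  -- basic size facts
  have hq1_2 : 2 ≤ q i₁ := (hq i₁).two_le
  have hq2_2 : 2 ≤ q i₂ := (hq i₂).two_le
  have hq4_2 : 2 ≤ q i₄ := (hq i₄).two_le
  have hq1P : p + 1 ≤ q i₁ := by
    have h := ((hS i₁).mpr (by simp)).symm
    have hd : p ∣ q i₁ - 1 := (Nat.modEq_iff_dvd' (by omega)).mp h
    have := Nat.le_of_dvd (by omega) hd
    omega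
  have hq4P : p + 1 ≤ q i₄ := by
    have h := ((hS i₄).mpr (by simp)).symm
    have hd : p ∣ q i₄ - 1 := (Nat.modEq_iff_dvd' (by omega)).mp h
    have := Nat.le_of_dvd (by omega) hd
    omega
  -- Phi evaluations
  have ePhi2 : Phi p (q i₂) = ∑ i ∈ Finset.range p, (q i₂ : ℤ) ^ i :=
    Phi_prime_eval p hp _
  have ePhi21 : Phi (p ^ 2) (q i₁) = ∑ i ∈ Finset.range p, ((q i₁ : ℤ) ^ p) ^ i := by
    have h := Phi_prime_pow_eval p 1 hp (q i₁ : ℤ)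
    norm_num at h
    simpa using h
  have ePhi34 : Phi (p ^ 3) (q i₄) = ∑ i ∈ Finset.range p, ((q i₄ : ℤ) ^ p ^ 2) ^ i := by
    have h := Phi_prime_pow_eval p 2 hp (q i₄ : ℤ)
    norm_num at h
    simpa using h
  have hrange : Finset.range p = Finset.range ((m + 4) + 1) := by
    have : p = (m + 4) + 1 := by omega
    rw [this]
  -- W1 : q₂^(m+4) < p * q₁^f₁
  have W1 : (q i₂) ^ (m + 4) < p * (q i₁) ^ f₁ := by
    have hz : ((q i₂ : ℤ)) ^ (m + 4) + 1 ≤ ∑ i ∈ Finset.range ((m + 4) + 1), (q i₂ : ℤ) ^ i :=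
      geom_lower (by positivity) (m + 4) (by omega)
    rw [← hrange, ← ePhi2, hC] at hz
    have hz2 : ((q i₂ : ℤ)) ^ (m + 4) < (p : ℤ) * (q i₁ : ℤ) ^ f₁ := by linarith
    exact_mod_cast hz2
  -- W3 : q₁^(p*(m+4)) < p * q₂^e₂ * q₄^e₄
  have W3 : (q i₁) ^ (p * (m + 4)) < p * (q i₂) ^ e₂ * (q i₄) ^ e₄ := by
    have hz : (((q i₁ : ℤ)) ^ p) ^ (m + 4) + 1 ≤
        ∑ i ∈ Finset.range ((m + 4) + 1), ((q i₁ : ℤ) ^ p) ^ i :=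
      geom_lower (by positivity) (m + 4) (by omega)
    rw [← hrange, ← ePhi21, hB] at hz
    have hz2 : ((q i₁ : ℤ)) ^ (p * (m + 4)) <
        (p : ℤ) * (q i₂ : ℤ) ^ e₂ * (q i₄ : ℤ) ^ e₄ := by
      rw [pow_mul]; linarith
    exact_mod_cast hz2
  -- W2 : q₄^(p^2*(m+4)) < p * q₁^h₁
  have W2 : (q i₄) ^ (p ^ 2 * (m + 4)) < p * (q i₁) ^ h₁ := by
    have hz : (((q i₄ : ℤ)) ^ p ^ 2) ^ (m + 4) + 1 ≤
        ∑ i ∈ Finset.range ((m + 4) + 1), ((q i₄ : ℤ) ^ p ^ 2) ^ i :=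
      geom_lower (by positivity) (m + 4) (by omega)
    rw [← hrange, ← ePhi34, hΦ3] at hz
    have hz2 : ((q i₄ : ℤ)) ^ (p ^ 2 * (m + 4)) < (p : ℤ) * (q i₁ : ℤ) ^ h₁ := by
      rw [pow_mul]; linarith
    exact_mod_cast hz2
  -- valuation bound : q_j ^ k ∣ 2N → k ≤ 2 β j
  have hval : ∀ (j : Fin s) (k : ℕ), (q j) ^ k ∣ 2 * N → k ≤ 2 * β j := by
    intro j k hdvd
    by_contra hk
    have h1 : (q j) ^ (2 * β j + 1) ∣ 2 * N :=
      dvd_trans (pow_dvd_pow _ (by omega)) hdvd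
    have hsplit : 2 * N = (q j) ^ (2 * β j) *
        (2 * (p ^ α * ∏ i ∈ Finset.univ.erase j, (q i) ^ (2 * β i))) := by
      rw [hN, ← Finset.mul_prod_erase _ _ (Finset.mem_univ j)]; ring
    rw [hsplit] at h1
    have hqj2 : q j ≠ 2 := by
      have := hqodd j
      rw [Nat.odd_iff] at this
      omega
    have hcop : Nat.Coprime ((q j) ^ (2 * β j + 1))
        (2 * (p ^ α * ∏ i ∈ Finset.univ.erase j, (q i) ^ (2 * β i))) := by
      apply Nat.Coprime.pow_left
      refine Nat.Coprime.mul_right ?_ (Nat.Coprime.mul_right ?_ ?_)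
      · exact (Nat.coprime_primes (hq j) Nat.prime_two).mpr hqj2
      · exact Nat.Coprime.pow_right _
          ((Nat.coprime_primes (hq j) hp).mpr (fun h => (hpq j) h.symm))
      · refine Nat.Coprime.prod_right fun i hi => Nat.Coprime.pow_right _ ?_
        refine (Nat.coprime_primes (hq j) (hq i)).mpr (fun h => ?_)
        exact (Finset.mem_erase.mp hi).1 (hinj h.symm)
    have h2 : (q j) ^ (2 * β j + 1) ∣ (q j) ^ (2 * β j) :=
      Nat.Coprime.dvd_of_dvd_mul_right hcop h1
    have h3 := Nat.le_of_dvd (pow_pos (hq j).pos _) h2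
    have h4 : (q j) ^ (2 * β j) < (q j) ^ (2 * β j + 1) :=
      Nat.pow_lt_pow_right (hq j).one_lt (by omega)
    exact absurd h3 (not_le.mpr h4)
  -- σ(q_j^{2βj}) ∣ 2N
  have hσdvd : ∀ j : Fin s, ArithmeticFunction.sigma 1 ((q j) ^ (2 * β j)) ∣ 2 * N := by
    intro j
    rw [← hperf]
    have hsplit : N = (q j) ^ (2 * β j) *
        (p ^ α * ∏ i ∈ Finset.univ.erase j, (q i) ^ (2 * β i)) := by
      rw [hN, ← Finset.mul_prod_erase _ _ (Finset.mem_univ j)]; ring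
    have hcop : Nat.Coprime ((q j) ^ (2 * β j))
        (p ^ α * ∏ i ∈ Finset.univ.erase j, (q i) ^ (2 * β i)) := by
      apply Nat.Coprime.pow_left
      refine Nat.Coprime.mul_right ?_ ?_
      · exact Nat.Coprime.pow_right _
          ((Nat.coprime_primes (hq j) hp).mpr (fun h => (hpq j) h.symm))
      · refine Nat.Coprime.prod_right fun i hi => Nat.Coprime.pow_right _ ?_
        refine (Nat.coprime_primes (hq j) (hq i)).mpr (fun h => ?_)
        exact (Finset.mem_erase.mp hi).1 (hinj h.symm)
    rw [hsplit, ArithmeticFunction.isMultiplicative_sigma.map_mul_of_coprime hcop]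
    exact dvd_mul_right _ _
  -- σ(q₁^{2β₁}) = Φ_p(q₁) Φ_{p²}(q₁) in ℤ
  have hsig1 : ((ArithmeticFunction.sigma 1 ((q i₁) ^ (2 * β i₁)) : ℕ) : ℤ) =
      Phi p (q i₁) * Phi (p ^ 2) (q i₁) := by
    rw [ArithmeticFunction.sigma_one_apply_prime_pow (hq i₁), hβ1]
    push_cast
    exact geom_eq_phi_sq p hp (by exact_mod_cast hq1_2)
  have hsig4 : ((ArithmeticFunction.sigma 1 ((q i₄) ^ (2 * β i₄)) : ℕ) : ℤ) =
      Phi p (q i₄) * Phi (p ^ 2) (q i₄) * Phi (p ^ 3) (q i₄) := by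
    rw [ArithmeticFunction.sigma_one_apply_prime_pow (hq i₄), hβ4]
    push_cast
    exact geom_eq_phi_cube p hp (by exact_mod_cast hq4_2)
  -- e₂ ≤ 2 β i₂
  have he2b : e₂ ≤ 2 * β i₂ := by
    apply hval i₂
    have d1 : ((q i₂ : ℤ)) ^ e₂ ∣ Phi (p ^ 2) (q i₁) :=
      ⟨(p : ℤ) * (q i₄ : ℤ) ^ e₄, by rw [hB]; ring⟩
    have d2 : Phi (p ^ 2) (q i₁) ∣ ((ArithmeticFunction.sigma 1 ((q i₁) ^ (2 * β i₁)) : ℕ) : ℤ) := by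
      rw [hsig1]; exact dvd_mul_left _ _
    have d3 : ((ArithmeticFunction.sigma 1 ((q i₁) ^ (2 * β i₁)) : ℕ) : ℤ) ∣ ((2 * N : ℕ) : ℤ) :=
      Int.natCast_dvd_natCast.mpr (hσdvd i₁)
    have := d1.trans (d2.trans d3)
    exact_mod_cast this
  -- h₁ ≤ 2 β i₁
  have hh1b : h₁ ≤ 2 * β i₁ := by
    apply hval i₁
    have d1 : ((q i₁ : ℤ)) ^ h₁ ∣ Phi (p ^ 3) (q i₄) := ⟨(p : ℤ), by rw [hΦ3]; ring⟩
    have d2 : Phi (p ^ 3) (q i₄) ∣ ((ArithmeticFunction.sigma 1 ((q i₄) ^ (2 * β i₄)) : ℕ) : ℤ) := by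
      rw [hsig4]; exact dvd_mul_left _ _
    have d3 : ((ArithmeticFunction.sigma 1 ((q i₄) ^ (2 * β i₄)) : ℕ) : ℤ) ∣ ((2 * N : ℕ) : ℤ) :=
      Int.natCast_dvd_natCast.mpr (hσdvd i₄)
    have := d1.trans (d2.trans d3)
    exact_mod_cast this
  have hsq : p ^ 2 = m ^ 2 + 10 * m + 25 := by rw [hpdef]; ring
  have he2m : e₂ ≤ m ^ 2 + 10 * m + 24 := by linarith [hβ2, hsq, he2b]
  have hh1m : h₁ ≤ m ^ 2 + 10 * m + 24 := by linarith [hβ1, hsq, hh1b]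
  -- key fact : q₄^{e₄} < p^{p²}
  have hq4e4_dvd : ((q i₄ : ℤ)) ^ e₄ ∣ (q i₁ : ℤ) ^ (p ^ 2) - 1 := by
    have d1 : ((q i₄ : ℤ)) ^ e₄ ∣ Phi (p ^ 2) (q i₁) :=
      ⟨(p : ℤ) * (q i₂ : ℤ) ^ e₂, by rw [hB]; ring⟩
    have d2 : Phi (p ^ 2) (q i₁) ∣ (q i₁ : ℤ) ^ (p ^ 2) - 1 := by
      have h := Polynomial.eval_dvd (x := (q i₁ : ℤ))
        (Polynomial.cyclotomic.dvd_X_pow_sub_one (p ^ 2) ℤ)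
      simpa [Phi] using h
    exact d1.trans d2
  have hq4p2_dvd : ((q i₄ : ℤ)) ^ (p ^ 2) ∣ (p : ℤ) * (q i₁ : ℤ) ^ h₁ - 1 := by
    rw [← hΦ3, ePhi34, hrange, Finset.sum_range_succ']
    simp only [pow_zero]
    rw [add_sub_cancel_right]
    apply Finset.dvd_sum
    intro i _
    exact dvd_pow_self ((q i₄ : ℤ) ^ p ^ 2) (Nat.succ_ne_zero i)
  have dA : ((q i₄ : ℤ)) ^ (min e₄ (p ^ 2)) ∣ (q i₁ : ℤ) ^ (p ^ 2) - 1 :=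
    (pow_dvd_pow _ (min_le_left _ _)).trans hq4e4_dvd
  have dB : ((q i₄ : ℤ)) ^ (min e₄ (p ^ 2)) ∣ (p : ℤ) * (q i₁ : ℤ) ^ h₁ - 1 :=
    (pow_dvd_pow _ (min_le_right _ _)).trans hq4p2_dvd
  have key : ((q i₄ : ℤ)) ^ (min e₄ (p ^ 2)) ∣ (p : ℤ) ^ (p ^ 2) - 1 := by
    have h1 : ((q i₄ : ℤ)) ^ (min e₄ (p ^ 2)) ∣ ((p : ℤ) * (q i₁ : ℤ) ^ h₁) ^ (p ^ 2) - 1 :=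
      dvd_trans dB (sub_one_dvd_pow_sub_one ((p : ℤ) * (q i₁ : ℤ) ^ h₁) (p ^ 2))
    have h2 : ((q i₄ : ℤ)) ^ (min e₄ (p ^ 2)) ∣ ((q i₁ : ℤ) ^ (p ^ 2)) ^ h₁ - 1 :=
      dvd_trans dA (sub_one_dvd_pow_sub_one ((q i₁ : ℤ) ^ (p ^ 2)) h₁)
    have h3 : (p : ℤ) ^ (p ^ 2) - 1 =
        (((p : ℤ) * (q i₁ : ℤ) ^ h₁) ^ (p ^ 2) - 1) -
          (p : ℤ) ^ (p ^ 2) * (((q i₁ : ℤ) ^ (p ^ 2)) ^ h₁ - 1) := by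
      ring
    rw [h3]
    exact dvd_sub h1 (Dvd.dvd.mul_left h2 _)
  have hp1Z : (1 : ℤ) < (p : ℤ) := by exact_mod_cast hp.one_lt
  have hppow_pos : (0 : ℤ) < (p : ℤ) ^ (p ^ 2) - 1 := by
    have := one_lt_pow₀ hp1Z (show p ^ 2 ≠ 0 from pow_ne_zero 2 (by omega))
    linarith
  have hsizeZ : ((q i₄ : ℤ)) ^ (min e₄ (p ^ 2)) ≤ (p : ℤ) ^ (p ^ 2) - 1 :=
    Int.le_of_dvd hppow_pos key
  have hsizeN : (q i₄) ^ (min e₄ (p ^ 2)) < p ^ (p ^ 2) := by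
    have h : ((q i₄ : ℤ)) ^ (min e₄ (p ^ 2)) < (p : ℤ) ^ (p ^ 2) := by linarith
    exact_mod_cast h
  have he4lt : e₄ < p ^ 2 := by
    by_contra h4
    have hwp : min e₄ (p ^ 2) = p ^ 2 := min_eq_right (by omega)
    rw [hwp] at hsizeN
    have hle : p ^ (p ^ 2) ≤ (q i₄) ^ (p ^ 2) := Nat.pow_le_pow_left (by omega) _
    exact absurd hsizeN (not_lt.mpr hle)
  have W4 : (q i₄) ^ e₄ < p ^ (p ^ 2) := by
    have hwe : min e₄ (p ^ 2) = e₄ := min_eq_left he4lt.le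
    rwa [hwe] at hsizeN
  -- W6 : p^(m+4) < q₁
  have W6 : p ^ (m + 4) < q i₁ := by
    have c2 : p ^ (p ^ 2 * (m + 4)) < (q i₄) ^ (p ^ 2 * (m + 4)) :=
      Nat.pow_lt_pow_left (by omega)
        (Nat.mul_ne_zero (pow_ne_zero 2 (by omega)) (by omega))
    have c3 : p ^ (p ^ 2 * (m + 4)) < p * (q i₁) ^ h₁ := c2.trans W2
    have c4 : (q i₁) ^ h₁ ≤ (q i₁) ^ (m ^ 2 + 10 * m + 24) :=
      Nat.pow_le_pow_right (by omega) hh1m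
    have c5 : p ^ (p ^ 2 * (m + 4)) < p * (q i₁) ^ (m ^ 2 + 10 * m + 24) :=
      lt_of_lt_of_le c3 (Nat.mul_le_mul_left _ c4)
    have c6 : p * (p ^ (m + 4)) ^ (m ^ 2 + 10 * m + 24) ≤ p ^ (p ^ 2 * (m + 4)) := by
      rw [← pow_mul, ← pow_succ']
      apply Nat.pow_le_pow_right (by omega)
      have hb : p ^ 2 * (m + 4) = (m + 4) * (m ^ 2 + 10 * m + 24) + (m + 4) := by
        rw [hsq]; ring
      linarith
    have c7 : p * (p ^ (m + 4)) ^ (m ^ 2 + 10 * m + 24) <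
        p * (q i₁) ^ (m ^ 2 + 10 * m + 24) := lt_of_le_of_lt c6 c5
    have c8 : (p ^ (m + 4)) ^ (m ^ 2 + 10 * m + 24) <
        (q i₁) ^ (m ^ 2 + 10 * m + 24) := Nat.lt_of_mul_lt_mul_left c7
    exact lt_of_pow_lt_pow_left₀ _ (Nat.zero_le _) c8
  -- final chain
  have aNe : (m + 4) ≠ 0 := by omega
  have D1 : ((q i₁) ^ (p * (m + 4))) ^ (m + 4) <
      (p * (q i₂) ^ e₂ * (q i₄) ^ e₄) ^ (m + 4) :=
    Nat.pow_lt_pow_left W3 aNe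
  have D2 : (p * (q i₂) ^ e₂ * (q i₄) ^ e₄) ^ (m + 4) =
      p ^ (m + 4) * ((q i₂) ^ e₂) ^ (m + 4) * ((q i₄) ^ e₄) ^ (m + 4) := by
    rw [mul_pow, mul_pow]
  have D3 : ((q i₂) ^ e₂) ^ (m + 4) ≤ (p * (q i₁) ^ f₁) ^ e₂ := by
    rw [pow_right_comm]
    exact Nat.pow_le_pow_left W1.le e₂
  have D4 : ((q i₄) ^ e₄) ^ (m + 4) ≤ (p ^ (p ^ 2)) ^ (m + 4) :=
    Nat.pow_le_pow_left W4.le _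
  have D5 : ((q i₁) ^ (p * (m + 4))) ^ (m + 4) <
      p ^ (m + 4) * (p * (q i₁) ^ f₁) ^ e₂ * (p ^ (p ^ 2)) ^ (m + 4) := by
    calc ((q i₁) ^ (p * (m + 4))) ^ (m + 4)
        < p ^ (m + 4) * ((q i₂) ^ e₂) ^ (m + 4) * ((q i₄) ^ e₄) ^ (m + 4) := by
          rw [← D2]; exact D1
      _ ≤ p ^ (m + 4) * (p * (q i₁) ^ f₁) ^ e₂ * (p ^ (p ^ 2)) ^ (m + 4) :=
          Nat.mul_le_mul (Nat.mul_le_mul_left _ D3) D4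
  have D6 : p ^ (m + 4) * (p * (q i₁) ^ f₁) ^ e₂ * (p ^ (p ^ 2)) ^ (m + 4) =
      p ^ ((m + 4) + e₂ + p ^ 2 * (m + 4)) * (q i₁) ^ (f₁ * e₂) := by
    ring
  have D7 : (m + 4) + e₂ + p ^ 2 * (m + 4) ≤ m ^ 3 + 15 * m ^ 2 + 76 * m + 128 := by
    have hb : p ^ 2 * (m + 4) = m ^ 3 + 14 * m ^ 2 + 65 * m + 100 := by
      rw [hsq]; ring
    linarith
  have D8 : f₁ * e₂ + (2 * m ^ 2 + 22 * m + 56) ≤ (p * (m + 4)) * (m + 4) := by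
    have hfe : f₁ * e₂ ≤ (m + 1) * (m ^ 2 + 10 * m + 24) :=
      Nat.mul_le_mul hf14 he2m
    have hb1 : (m + 1) * (m ^ 2 + 10 * m + 24) = m ^ 3 + 11 * m ^ 2 + 34 * m + 24 := by ring
    have hb2 : (p * (m + 4)) * (m + 4) = m ^ 3 + 13 * m ^ 2 + 56 * m + 80 := by
      rw [hpdef]; ring
    linarith
  have D9 : (q i₁) ^ (f₁ * e₂ + (2 * m ^ 2 + 22 * m + 56)) ≤
      (q i₁) ^ ((p * (m + 4)) * (m + 4)) :=
    Nat.pow_le_pow_right (by omega) D8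
  have D10 : (q i₁) ^ (f₁ * e₂) * (q i₁) ^ (2 * m ^ 2 + 22 * m + 56) <
      (q i₁) ^ (f₁ * e₂) * p ^ (m ^ 3 + 15 * m ^ 2 + 76 * m + 128) := by
    have hR : p ^ ((m + 4) + e₂ + p ^ 2 * (m + 4)) ≤
        p ^ (m ^ 3 + 15 * m ^ 2 + 76 * m + 128) :=
      Nat.pow_le_pow_right (by omega) D7
    calc (q i₁) ^ (f₁ * e₂) * (q i₁) ^ (2 * m ^ 2 + 22 * m + 56)
        = (q i₁) ^ (f₁ * e₂ + (2 * m ^ 2 + 22 * m + 56)) := (pow_add _ _ _).symm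
      _ ≤ (q i₁) ^ ((p * (m + 4)) * (m + 4)) := D9
      _ = ((q i₁) ^ (p * (m + 4))) ^ (m + 4) := by rw [pow_mul]
      _ < p ^ ((m + 4) + e₂ + p ^ 2 * (m + 4)) * (q i₁) ^ (f₁ * e₂) := by
          rw [← D6]; exact D5
      _ ≤ p ^ (m ^ 3 + 15 * m ^ 2 + 76 * m + 128) * (q i₁) ^ (f₁ * e₂) :=
          Nat.mul_le_mul_right _ hR
      _ = (q i₁) ^ (f₁ * e₂) * p ^ (m ^ 3 + 15 * m ^ 2 + 76 * m + 128) := by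
          rw [mul_comm]
  have D11 : (q i₁) ^ (2 * m ^ 2 + 22 * m + 56) <
      p ^ (m ^ 3 + 15 * m ^ 2 + 76 * m + 128) :=
    Nat.lt_of_mul_lt_mul_left D10
  have D12 : p ^ (m ^ 3 + 15 * m ^ 2 + 76 * m + 128) ≤
      p ^ ((m + 4) * (2 * m ^ 2 + 22 * m + 56)) := by
    apply Nat.pow_le_pow_right (by omega)
    have hb : (m + 4) * (2 * m ^ 2 + 22 * m + 56) =
        2 * m ^ 3 + 30 * m ^ 2 + 144 * m + 224 := by ring
    linarith [Nat.zero_le (m ^ 3), Nat.zero_le (m ^ 2), Nat.zero_le m]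
  have D13 : p ^ ((m + 4) * (2 * m ^ 2 + 22 * m + 56)) ≤
      (q i₁) ^ (2 * m ^ 2 + 22 * m + 56) := by
    rw [pow_mul]
    exact Nat.pow_le_pow_left W6.le _
  exact absurd (lt_of_lt_of_le D11 (D12.trans D13)) (lt_irrefl _)
end

section
/- Under the full setup, if moreover f_1 ≥ ℓ − 3, then ℓ < 13; that is, the assumptions ℓ ≥ 13 and f_1 ≥ ℓ − 3 together lead to a contradiction. -/
/-!
Write `ν` for the `p`-adic valuation. A prime other than `p` dividing `Φ_{p^k}(b)` is
`≡ 1 (mod p^k)`, so `q₁ ≡ 1 (mod p³)` and `q₂ ≡ q₄ ≡ 1 (mod p²)`. If `p x^n = Φ_{p^(k+1)}(y)` with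
`y ≡ 1 (mod p²)`, then `x^n - 1 = (y^(p^k) - 1) u` with `p ∤ u`, and lifting the exponent on both
sides gives `ν(x - 1) + ν(n) = ν(y - 1) + k`. Applied to `Φ_p(q₂)`, `Φ_{p³}(q₄)` and to whichever of
`Φ_p(q₄)`, `Φ_{p²}(q₄)` is a power of `q₂`, this yields `ν(h₁) = ν(f₁) + ν(h₂) + 2`, resp. `+ 1`.

In the first case `p² ∣ h₁`, which is impossible: `q₁^(h₁ + f₁)` divides
`σ(q₂^(p²-1)) σ(q₄^(p³-1)) ∣ σ(N) = 2N`, in which `q₁` occurs only to the power `p² - 1`.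
In the second case `p ∣ h₁`. Since `Φ_p(Y)` lies between `Y^(p-1)` and `2 Y^(p-1)`, the three
equations give `q₁^(h₁(p-1) - p h₂ f₁) < p^(p(p-1+h₂))` with a positive exponent divisible by `p`;
hence `h₂ ≤ p + 2` and `q₁ < p^(2p+1)`, too small for `p q₁^h₁ = Φ_{p³}(q₄) > q₄^(p²(p-1))`
with `q₄ > 2p²`.
-/

open Finset

lemma Phi_prime_pow_succ {p : ℕ} (hp : p.Prime) (k y : ℕ) :
    Phi (p ^ (k + 1)) y = ((∑ i ∈ range p, (y ^ p ^ k) ^ i : ℕ) : ℤ) := by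
  simp [Phi, Polynomial.cyclotomic_prime_pow_eq_geom_sum hp, Polynomial.eval_finsetSum]

lemma mul_pow_eq_geom_sum_of_Phi_eq {p k x y n : ℕ} (hp : p.Prime)
    (h : Phi (p ^ (k + 1)) y = p * (x : ℤ) ^ n) : p * x ^ n = ∑ i ∈ range p, (y ^ p ^ k) ^ i := by
  rw [Phi_prime_pow_succ hp] at h
  exact_mod_cast h.symm

lemma pow_dvd_sigma_of_Phi_eq {d e q m r n : ℕ} (hd : d ∣ e + 1) (hd1 : d ≠ 1) (hq : q.Prime)
    (h : Phi d q = m * (r : ℤ) ^ n) : r ^ n ∣ ArithmeticFunction.sigma 1 (q ^ e) := by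
  have := Polynomial.eval_dvd (x := (q : ℤ)) (Polynomial.cyclotomic_dvd_geom_sum_of_dvd ℤ hd hd1)
  rw [← Phi, h] at this
  have hσ : (r : ℤ) ^ n ∣ (ArithmeticFunction.sigma 1 (q ^ e) : ℕ) := by
    simpa [ArithmeticFunction.sigma_one_apply_prime_pow hq, Polynomial.eval_finsetSum]
      using (dvd_mul_left _ _).trans this
  exact_mod_cast hσ

lemma dvd_sub_one_of_dvd_Phi {n r : ℕ} {b : ℤ} (hr : r.Prime) (hrn : ¬ r ∣ n)
    (hd : (r : ℤ) ∣ Phi n b) : n ∣ r - 1 := by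
  have : Fact r.Prime := ⟨hr⟩
  have : NeZero (n : ZMod r) := NeZero.of_not_dvd (ZMod r) hrn
  have hroot : (Polynomial.cyclotomic n (ZMod r)).IsRoot (b : ZMod r) := by
    rw [Polynomial.IsRoot, ← Polynomial.map_cyclotomic_int, Polynomial.eval_intCast_map,
      Int.coe_castRingHom, ZMod.intCast_zmod_eq_zero_iff_dvd]
    exact hd
  have hprim := Polynomial.isRoot_cyclotomic_iff.mp hroot
  have hn : n ≠ 0 := by rintro rfl; exact hrn (dvd_zero r)
  rw [hprim.eq_orderOf]
  exact ZMod.orderOf_dvd_card_sub_one (hprim.ne_zero hn)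

lemma exists_geom_sum_eq_mul_one_add {p d : ℕ} (hp1 : 1 < p) (hpodd : Odd p) (hd : p ^ 2 ∣ d) :
    ∃ u, ¬ p ∣ u ∧ ∑ i ∈ range p, (d + 1) ^ i = p * (1 + d * u) := by
  obtain ⟨k, hk⟩ := hpodd
  set T := ∑ i ∈ range p, ∑ j ∈ range i, (d + 1) ^ j
  have hsum : ∑ i ∈ range p, (d + 1) ^ i = p + d * T := by
    rw [sum_congr rfl fun i _ => (geom_sum_mul_add d i).symm, sum_add_distrib, ← sum_mul]
    simp only [sum_const, card_range, smul_eq_mul, mul_one, T]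
    ring
  -- modulo `p ^ 2` every `d + 1` is `1`, so `T` is `0 + 1 + ⋯ + (p - 1) = p * k`
  have hgauss : ∑ i ∈ range p, i = p * k := by
    have := sum_range_id_mul_two p
    rw [hk, Nat.add_sub_cancel] at this
    rw [hk]; nlinarith
  have hT : T ≡ p * k [MOD p ^ 2] := by
    rw [← ZMod.natCast_eq_natCast_iff, ← hgauss]
    have hd0 : (d : ZMod (p ^ 2)) = 0 := (ZMod.natCast_eq_zero_iff _ _).mpr hd
    simp [T, hd0]
  have hTeq : T = p * (p * (T / p ^ 2) + k) := by
    have hlt : p * k < p ^ 2 := by rw [sq]; exact Nat.mul_lt_mul_of_pos_left (by omega) (by omega)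
    conv_lhs => rw [← Nat.div_add_mod T (p ^ 2), hT, Nat.mod_eq_of_lt hlt]
    ring
  generalize T / p ^ 2 = a at hTeq
  refine ⟨p * a + k, fun hdvd => ?_, ?_⟩
  · have hpk : p ∣ k := (Nat.dvd_add_right (dvd_mul_right _ _)).mp hdvd
    have := Nat.le_of_dvd (by omega) hpk
    omega
  · rw [hsum, hTeq]
    ring

lemma padicValNat_pow_sub_one {p x n : ℕ} [Fact p.Prime] (hpodd : Odd p) (hx1 : 1 < x)
    (hx : p ∣ x - 1) (hn : n ≠ 0) :
    padicValNat p (x ^ n - 1) = padicValNat p (x - 1) + padicValNat p n := by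
  have hpx : ¬ p ∣ x := fun hpx => (Fact.out : p.Prime).not_dvd_one <| by
    simpa [Nat.sub_sub_self hx1.le] using Nat.dvd_sub hpx hx
  simpa using padicValNat.pow_sub_pow (y := 1) hpodd hx1 (by simpa using hx) hpx hn

lemma padicValNat_sub_one_of_mul_pow_eq_geom_sum {p x y n : ℕ} [hp : Fact p.Prime] (hpodd : Odd p)
    (hn : n ≠ 0) (hx1 : 1 < x) (hx : p ∣ x - 1) (hy1 : 1 < y) (hy : p ^ 2 ∣ y - 1)
    (h : p * x ^ n = ∑ i ∈ range p, y ^ i) :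
    padicValNat p (x - 1) + padicValNat p n = padicValNat p (y - 1) := by
  obtain ⟨u, hu, hsum⟩ := exists_geom_sum_eq_mul_one_add hp.out.one_lt hpodd hy
  rw [Nat.sub_add_cancel hy1.le, ← h] at hsum
  have hxn : x ^ n - 1 = (y - 1) * u := by
    have := Nat.eq_of_mul_eq_mul_left hp.out.pos hsum
    omega
  have hu0 : u ≠ 0 := by rintro rfl; exact hu (dvd_zero p)
  rw [← padicValNat_pow_sub_one hpodd hx1 hx hn, hxn, padicValNat.mul (by omega) hu0,
    padicValNat.eq_zero_of_not_dvd hu, add_zero]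

lemma padicValNat_sub_one_of_Phi_eq {p k x y n : ℕ} [hp : Fact p.Prime] (hpodd : Odd p)
    (hn : n ≠ 0) (hx1 : 1 < x) (hx : p ∣ x - 1) (hy1 : 1 < y) (hy : p ^ 2 ∣ y - 1)
    (h : Phi (p ^ (k + 1)) y = p * (x : ℤ) ^ n) :
    padicValNat p (x - 1) + padicValNat p n = padicValNat p (y - 1) + k := by
  have hpk : p ^ k ≠ 0 := pow_ne_zero _ hp.out.ne_zero
  have hY : padicValNat p (y ^ p ^ k - 1) = padicValNat p (y - 1) + k := by
    rw [padicValNat_pow_sub_one hpodd hy1 ((dvd_pow_self p two_ne_zero).trans hy) hpk,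
      padicValNat.prime_pow]
  rw [← hY]
  exact padicValNat_sub_one_of_mul_pow_eq_geom_sum hpodd hn hx1 hx (Nat.one_lt_pow hpk hy1)
    (hy.trans (Nat.sub_one_dvd_pow_sub_one y _)) (mul_pow_eq_geom_sum_of_Phi_eq hp.out h)

section PrimePowerProduct

variable {ι : Type*} [Fintype ι] {N p α : ℕ} {q e : ι → ℕ}

lemma factorization_eq_of_eq_pow_mul_prod (hN : N = p ^ α * ∏ i, q i ^ e i) (hp : p.Prime)
    (hq : ∀ i, (q i).Prime) (hinj : Function.Injective q) (hpq : ∀ i, p ≠ q i) (l : ι) :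
    N.factorization (q l) = e l := by
  classical
  have hprod : ∏ i, q i ^ e i ≠ 0 := prod_ne_zero_iff.mpr fun i _ => pow_ne_zero _ (hq i).ne_zero
  rw [hN, Nat.factorization_mul (pow_ne_zero _ hp.ne_zero) hprod,
    Nat.factorization_prod fun i _ => pow_ne_zero _ (hq i).ne_zero]
  simp [hp.factorization, (hq _).factorization, Finsupp.single_apply, hpq, hinj.eq_iff]

lemma sigma_mul_sigma_dvd_sigma (hN : N = p ^ α * ∏ i, q i ^ e i) (hp : p.Prime)
    (hq : ∀ i, (q i).Prime) (hinj : Function.Injective q) (hpq : ∀ i, p ≠ q i) {i j : ι}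
    (hij : i ≠ j) :
    ArithmeticFunction.sigma 1 (q i ^ e i) * ArithmeticFunction.sigma 1 (q j ^ e j) ∣
      ArithmeticFunction.sigma 1 N := by
  classical
  have hmult := ArithmeticFunction.isMultiplicative_sigma (k := 1)
  have hcop : (Set.univ : Set ι).Pairwise (Function.onFun Nat.Coprime fun i => q i ^ e i) :=
    fun i _ j _ hij => ((Nat.coprime_primes (hq i) (hq j)).mpr (hinj.ne hij)).pow _ _
  have hpcop : Nat.Coprime (p ^ α) (∏ i, q i ^ e i) :=
    Nat.Coprime.prod_right fun i _ => ((Nat.coprime_primes hp (hq i)).mpr (hpq i)).pow _ _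
  rw [hN, hmult.map_mul_of_coprime hpcop, hmult.map_prod _ _ (by rwa [coe_univ])]
  refine dvd_mul_of_dvd_right ?_ _
  rw [← prod_pair (f := fun i => ArithmeticFunction.sigma 1 (q i ^ e i)) hij]
  exact prod_dvd_prod_of_subset _ _ _ (subset_univ _)

lemma add_le_of_pow_dvd_sigma (hN : N = p ^ α * ∏ i, q i ^ e i)
    (hperf : ArithmeticFunction.sigma 1 N = 2 * N) (hp : p.Prime) (hq : ∀ i, (q i).Prime)
    (hinj : Function.Injective q) (hpq : ∀ i, p ≠ q i) {i j l : ι} (hij : i ≠ j)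
    (hl : Odd (q l)) {a b : ℕ} (ha : q l ^ a ∣ ArithmeticFunction.sigma 1 (q i ^ e i))
    (hb : q l ^ b ∣ ArithmeticFunction.sigma 1 (q j ^ e j)) :
    a + b ≤ e l := by
  have hN0 : N ≠ 0 := by
    rw [hN]
    exact mul_ne_zero (pow_ne_zero _ hp.ne_zero)
      (prod_ne_zero_iff.mpr fun i _ => pow_ne_zero _ (hq i).ne_zero)
  have h2N : q l ^ (a + b) ∣ 2 * N := by
    rw [pow_add, ← hperf]
    exact (mul_dvd_mul ha hb).trans (sigma_mul_sigma_dvd_sigma hN hp hq hinj hpq hij)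
  have hcop : Nat.Coprime (q l ^ (a + b)) 2 := (Nat.coprime_two_right.mpr hl).pow_left _
  rw [← factorization_eq_of_eq_pow_mul_prod hN hp hq hinj hpq l]
  exact ((hq l).pow_dvd_iff_le_factorization hN0).mp (hcop.dvd_of_dvd_mul_left h2N)

end PrimePowerProduct

lemma pow_pred_lt_geom_sum {y n : ℕ} (hn : 2 ≤ n) :
    y ^ (n - 1) < ∑ i ∈ range n, y ^ i := by
  obtain ⟨m, rfl⟩ : ∃ m, n = m + 1 + 1 := ⟨n - 2, by omega⟩
  rw [sum_range_succ, sum_range_succ']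
  simp

lemma geom_sum_lt_two_mul_pow_pred {y n : ℕ} (hy : 2 ≤ y) (hn : 1 ≤ n) :
    ∑ i ∈ range n, y ^ i < 2 * y ^ (n - 1) := by
  obtain ⟨m, rfl⟩ : ∃ m, n = m + 1 := ⟨n - 1, by omega⟩
  rw [sum_range_succ, Nat.add_sub_cancel, two_mul]
  have := Nat.geomSum_lt hy (s := range m) (n := m) (by simp)
  omega

lemma sq_le_two_pow {n : ℕ} (hn : 4 ≤ n) : n ^ 2 ≤ 2 ^ n := by
  induction n, hn using Nat.le_induction with
  | base => norm_num
  | succ n hn ih =>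
    have : 2 ^ (n + 1) = 2 * 2 ^ n := by ring
    nlinarith

lemma two_pow_mul_pow_le {p X : ℕ} (hp : 8 ≤ p) (hX : 3 * p ≤ 2 * X) :
    2 ^ X * p ^ (p - 1) ≤ p ^ X :=
  calc 2 ^ X * p ^ (p - 1) ≤ 2 ^ (3 * (X - p + 1)) * p ^ (p - 1) := by gcongr <;> omega
    _ = 8 ^ (X - p + 1) * p ^ (p - 1) := by rw [pow_mul]; norm_num
    _ ≤ p ^ (X - p + 1) * p ^ (p - 1) := by gcongr
    _ = p ^ X := by rw [← pow_add]; congr 1; omega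

lemma le_add_two_of_mul_lt {p h k f : ℕ} (hp : 13 ≤ p) (hgap : p * k * f < h * (p - 1))
    (hcount : h + f < p ^ 2) (hf : p - 3 ≤ f) : k ≤ p + 2 := by
  by_contra! hk
  obtain ⟨m, rfl⟩ : ∃ m, p = m + 13 := ⟨p - 13, by omega⟩
  rw [show m + 13 - 1 = m + 12 by omega] at hgap
  have hk' : (m + 13) * (m + 16) * f ≤ (m + 13) * k * f := by gcongr; omega
  have hh' : (h + f + 1) * (m + 12) ≤ (m + 13) ^ 2 * (m + 12) := by gcongr; omega
  have hf' : (m + 10) * ((m + 13) * (m + 16) + (m + 12)) ≤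
      f * ((m + 13) * (m + 16) + (m + 12)) := by gcongr; omega
  nlinarith

lemma mul_pow_lt_pow_pow_sub_one {p x z h : ℕ} (hp : 13 ≤ p) (hz : 2 * p ^ 2 < z)
    (hx : x ≤ p ^ (2 * p + 1)) (hh : h + p ≤ p ^ 2 + 2) : p * x ^ h < (z ^ p ^ 2) ^ (p - 1) := by
  have hexp : 1 + (2 * p + 1) * h ≤ 2 * (p * (p - 1)) + 2 * (p ^ 2 * (p - 1)) := by
    obtain ⟨m, rfl⟩ : ∃ m, p = m + 1 := ⟨p - 1, by omega⟩
    rw [Nat.add_sub_cancel]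
    nlinarith
  have hM : p ^ 2 * (p - 1) ≠ 0 := mul_ne_zero (by positivity) (by omega)
  calc p * x ^ h ≤ p * (p ^ (2 * p + 1)) ^ h := by gcongr
    _ = p ^ (1 + (2 * p + 1) * h) := by ring
    _ ≤ p ^ (2 * (p * (p - 1)) + 2 * (p ^ 2 * (p - 1))) := Nat.pow_le_pow_right (by omega) hexp
    _ = (p ^ 2) ^ (p * (p - 1)) * (p ^ 2) ^ (p ^ 2 * (p - 1)) := by ring
    _ ≤ (2 ^ p) ^ (p * (p - 1)) * (p ^ 2) ^ (p ^ 2 * (p - 1)) := by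
        gcongr (?_) ^ _ * _
        exact sq_le_two_pow (by omega)
    _ = (2 * p ^ 2) ^ (p ^ 2 * (p - 1)) := by ring
    _ < z ^ (p ^ 2 * (p - 1)) := Nat.pow_lt_pow_left hz hM
    _ = (z ^ p ^ 2) ^ (p - 1) := by ring

lemma two_mul_lt_of_dvd_sub_one {n z : ℕ} (hn : Odd n) (hz : Odd z) (hz1 : 1 < z)
    (h : n ∣ z - 1) : 2 * n < z := by
  have := Nat.le_of_dvd (by omega)
    ((Nat.coprime_two_left.mpr hn).mul_dvd_of_dvd_of_dvd (Nat.Odd.sub_odd hz odd_one).two_dvd h)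
  omega

section GeomSumSystem

variable {p x y z h k f : ℕ}

lemma pow_lt_of_geom_sum_eqs (h₁ : p * x ^ h = ∑ i ∈ range p, (z ^ p ^ 2) ^ i)
    (h₂ : p * y ^ k = ∑ i ∈ range p, (z ^ p) ^ i) (h₃ : p * x ^ f = ∑ i ∈ range p, y ^ i)
    (hp : 2 ≤ p) (hz : 2 ≤ z) :
    x ^ (h * (p - 1)) < p ^ (p * (p - 1 + k)) * x ^ (p * k * f) := by
  have hzp : 2 ≤ z ^ p ^ 2 := hz.trans (Nat.le_self_pow (by positivity) z)
  have i_up := geom_sum_lt_two_mul_pow_pred hzp (n := p) (by omega)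
  have ii_low := pow_pred_lt_geom_sum (y := z ^ p) (n := p) hp
  have iii_low := pow_pred_lt_geom_sum (y := y) (n := p) hp
  rw [← h₁] at i_up
  rw [← h₂] at ii_low
  rw [← h₃] at iii_low
  have hp1 : p - 1 ≠ 0 := by omega
  refine Nat.lt_of_mul_lt_mul_left (a := p ^ (p - 1)) ?_
  calc p ^ (p - 1) * x ^ (h * (p - 1)) = (p * x ^ h) ^ (p - 1) := by ring
    _ < (2 * (z ^ p ^ 2) ^ (p - 1)) ^ (p - 1) := Nat.pow_lt_pow_left i_up hp1
    _ = 2 ^ (p - 1) * ((z ^ p) ^ (p - 1)) ^ (p * (p - 1)) := by ring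
    _ < 2 ^ (p - 1) * (p * y ^ k) ^ (p * (p - 1)) := by gcongr
    _ = 2 ^ (p - 1) * p ^ (p * (p - 1)) * (y ^ (p - 1)) ^ (k * p) := by ring
    _ ≤ 2 ^ (p - 1) * p ^ (p * (p - 1)) * (p * x ^ f) ^ (k * p) := by gcongr
    _ = 2 ^ (p - 1) * (p ^ (p * (p - 1 + k)) * x ^ (p * k * f)) := by ring
    _ ≤ p ^ (p - 1) * (p ^ (p * (p - 1 + k)) * x ^ (p * k * f)) := by gcongr

lemma mul_lt_of_geom_sum_eqs (h₁ : p * x ^ h = ∑ i ∈ range p, (z ^ p ^ 2) ^ i)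
    (h₂ : p * y ^ k = ∑ i ∈ range p, (z ^ p) ^ i) (h₃ : p * x ^ f = ∑ i ∈ range p, y ^ i)
    (hp : 13 ≤ p) (hx : 2 ≤ x) (hy : 2 ≤ y) (hz : 2 ≤ z) :
    p * k * f < h * (p - 1) := by
  have hzp : 2 ≤ z ^ p := hz.trans (Nat.le_self_pow (by positivity) z)
  have i_low := pow_pred_lt_geom_sum (y := z ^ p ^ 2) (n := p) (by omega)
  have ii_up := geom_sum_lt_two_mul_pow_pred hzp (n := p) (by omega)
  have iii_up := geom_sum_lt_two_mul_pow_pred hy (n := p) (by omega)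
  rw [← h₁] at i_low
  rw [← h₂] at ii_up
  rw [← h₃] at iii_up
  have hp1 : p - 1 ≠ 0 := by omega
  have hX : 2 ^ (p * (p - 1 + k)) * p ^ (p - 1) ≤ p ^ (p * (p - 1 + k)) :=
    two_pow_mul_pow_le (by omega) (by nlinarith [show 12 ≤ p - 1 + k by omega])
  set X := p * (p - 1 + k)
  rw [← Nat.pow_lt_pow_iff_right (by omega : 1 < x)]
  refine Nat.lt_of_mul_lt_mul_left (a := p ^ X) ?_
  calc p ^ X * x ^ (p * k * f) = (p * x ^ f) ^ (k * p) * p ^ (p * (p - 1)) := by ring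
    _ ≤ (2 * y ^ (p - 1)) ^ (k * p) * p ^ (p * (p - 1)) := by gcongr
    _ = 2 ^ (k * p) * (p * y ^ k) ^ (p * (p - 1)) := by ring
    _ < 2 ^ (k * p) * (2 * (z ^ p) ^ (p - 1)) ^ (p * (p - 1)) := by gcongr
    _ = 2 ^ X * ((z ^ p ^ 2) ^ (p - 1)) ^ (p - 1) := by ring
    _ < 2 ^ X * (p * x ^ h) ^ (p - 1) := by gcongr
    _ = 2 ^ X * p ^ (p - 1) * x ^ (h * (p - 1)) := by ring
    _ ≤ p ^ X * x ^ (h * (p - 1)) := by gcongr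

lemma lt_thirteen_of_geom_sum_eqs (h₁ : p * x ^ h = ∑ i ∈ range p, (z ^ p ^ 2) ^ i)
    (h₂ : p * y ^ k = ∑ i ∈ range p, (z ^ p) ^ i) (h₃ : p * x ^ f = ∑ i ∈ range p, y ^ i)
    (hx : 2 ≤ x) (hy : 2 ≤ y) (hz : 2 * p ^ 2 < z) (hph : p ∣ h) (hcount : h + f < p ^ 2)
    (hf : p - 3 ≤ f) : p < 13 := by
  by_contra! hp
  have hgap := mul_lt_of_geom_sum_eqs h₁ h₂ h₃ hp hx hy (by nlinarith)
  have hgap_p : p ≤ h * (p - 1) - p * k * f :=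
    Nat.le_of_dvd (by omega) (Nat.dvd_sub (hph.mul_right _) (mul_assoc p k f ▸ dvd_mul_right _ _))
  have hx_lt : x < p ^ (p - 1 + k) := by
    have hup := pow_lt_of_geom_sum_eqs h₁ h₂ h₃ (by omega) (by nlinarith)
    rw [← Nat.add_sub_cancel' hgap.le, pow_add, mul_comm (p ^ _)] at hup
    refine lt_of_pow_lt_pow_left₀ p (Nat.zero_le _) ?_
    calc x ^ p ≤ x ^ (h * (p - 1) - p * k * f) := Nat.pow_le_pow_right (by omega) hgap_p
      _ < p ^ (p * (p - 1 + k)) := Nat.lt_of_mul_lt_mul_left hup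
      _ = (p ^ (p - 1 + k)) ^ p := by ring
  have hk := le_add_two_of_mul_lt hp hgap hcount hf
  have hx_le : x ≤ p ^ (2 * p + 1) := hx_lt.le.trans (Nat.pow_le_pow_right (by omega) (by omega))
  have := mul_pow_lt_pow_pow_sub_one hp hz hx_le (show h + p ≤ p ^ 2 + 2 by omega)
  have := pow_pred_lt_geom_sum (y := z ^ p ^ 2) (n := p) (by omega)
  omega

end GeomSumSystem

theorem ell_lt_thirteen_general
    (N p α s : ℕ) (q β : Fin s → ℕ)
    (hN : N = p ^ α * ∏ i, q i ^ (2 * β i))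
    (hperf : ArithmeticFunction.sigma 1 N = 2 * N)
    (hp : p.Prime) (hpodd : Odd p)
    (hq : ∀ i, (q i).Prime) (hqodd : ∀ i, Odd (q i))
    (hinj : Function.Injective q)
    (hpq : ∀ i, p ≠ q i)
    (i₁ i₂ i₃ i₄ : Fin s)
    (hij : i₁ ≠ i₂ ∧ i₁ ≠ i₃ ∧ i₁ ≠ i₄ ∧ i₂ ≠ i₃ ∧ i₂ ≠ i₄ ∧ i₃ ≠ i₄)
    (hβ1 : 2 * β i₁ + 1 = p ^ 2) (hβ2 : 2 * β i₂ + 1 = p ^ 2)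
    (hβ4 : 2 * β i₄ + 1 = p ^ 3)
    (h₁ : ℕ) (hh₁ : 0 < h₁)
    (hΦ3 : Phi (p ^ 3) (q i₄) = p * (q i₁ : ℤ) ^ h₁)
    (hΦ12 : ∃ h₂ h₃ : ℕ, 0 < h₂ ∧ 0 < h₃ ∧
      ((Phi p (q i₄) = p * (q i₂ : ℤ) ^ h₂ ∧ Phi (p ^ 2) (q i₄) = p * (q i₃ : ℤ) ^ h₃) ∨
       (Phi p (q i₄) = p * (q i₃ : ℤ) ^ h₃ ∧ Phi (p ^ 2) (q i₄) = p * (q i₂ : ℤ) ^ h₂)))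
    (e₂ e₄ : ℕ) (he₂ : 0 < e₂) (he₄ : 0 < e₄)
    (hB : Phi (p ^ 2) (q i₁) = p * (q i₂ : ℤ) ^ e₂ * (q i₄ : ℤ) ^ e₄)
    (f₁ : ℕ) (hf₁ : 0 < f₁)
    (hC : Phi p (q i₂) = p * (q i₁ : ℤ) ^ f₁)
    (hf₁ℓ : p - 3 ≤ f₁) :
    p < 13 := by
  by_contra! hp13
  have : Fact p.Prime := ⟨hp⟩
  have hq2 : ∀ i, 2 ≤ q i := fun i => (hq i).two_le
  have hqp : ∀ i k, ¬ q i ∣ p ^ k := fun i k hdvd =>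
    hpq i ((Nat.prime_dvd_prime_iff_eq (hq i) hp).mp ((hq i).dvd_of_dvd_pow hdvd)).symm
  have hcong₁ : p ^ 3 ∣ q i₁ - 1 := dvd_sub_one_of_dvd_Phi (hq i₁) (hqp _ _) <| by
    rw [hΦ3]; exact dvd_mul_of_dvd_right (dvd_pow_self _ hh₁.ne') _
  have hcong₂ : p ^ 2 ∣ q i₂ - 1 := dvd_sub_one_of_dvd_Phi (hq i₂) (hqp _ _) <| by
    rw [hB]; exact dvd_mul_of_dvd_left (dvd_mul_of_dvd_right (dvd_pow_self _ he₂.ne') _) _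
  have hcong₄ : p ^ 2 ∣ q i₄ - 1 := dvd_sub_one_of_dvd_Phi (hq i₄) (hqp _ _) <| by
    rw [hB]; exact dvd_mul_of_dvd_right (dvd_pow_self _ he₄.ne') _
  have hcount : h₁ + f₁ < p ^ 2 := by
    have hp3 : p ^ 3 ≠ 1 := (Nat.one_lt_pow three_ne_zero hp.one_lt).ne'
    have := add_le_of_pow_dvd_sigma hN hperf hp hq hinj hpq hij.2.2.2.2.1 (hqodd i₁)
      (pow_dvd_sigma_of_Phi_eq (hβ2 ▸ dvd_pow_self p two_ne_zero) hp.ne_one (hq i₂) hC)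
      (pow_dvd_sigma_of_Phi_eq hβ4.symm.dvd hp3 (hq i₄) hΦ3)
    omega
  have hC' : Phi (p ^ (0 + 1)) (q i₂) = p * (q i₁ : ℤ) ^ f₁ := by rwa [zero_add, pow_one]
  have hdvd₁ : p ∣ q i₁ - 1 := (dvd_pow_self p three_ne_zero).trans hcong₁
  have hdvd₂ : p ∣ q i₂ - 1 := (dvd_pow_self p two_ne_zero).trans hcong₂
  have v₁₂ := padicValNat_sub_one_of_Phi_eq hpodd hf₁.ne' (hq2 i₁) hdvd₁ (hq2 i₂) hcong₂ hC'
  have v₁₄ := padicValNat_sub_one_of_Phi_eq hpodd hh₁.ne' (hq2 i₁) hdvd₁ (hq2 i₄) hcong₄ hΦ3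
  obtain ⟨h₂, h₃, hh₂, -, ⟨hΦ1, -⟩ | ⟨-, hΦ2⟩⟩ := hΦ12
  · have hΦ1' : Phi (p ^ (0 + 1)) (q i₄) = p * (q i₂ : ℤ) ^ h₂ := by rwa [zero_add, pow_one]
    have v₂₄ := padicValNat_sub_one_of_Phi_eq hpodd hh₂.ne' (hq2 i₂) hdvd₂ (hq2 i₄) hcong₄ hΦ1'
    have hp2h : p ^ 2 ∣ h₁ := (padicValNat_dvd_iff_le hh₁.ne').mpr (by omega)
    have := Nat.le_of_dvd hh₁ hp2h
    omega
  · have v₂₄ := padicValNat_sub_one_of_Phi_eq hpodd hh₂.ne' (hq2 i₂) hdvd₂ (hq2 i₄) hcong₄ hΦ2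
    have hph : p ∣ h₁ := dvd_of_one_le_padicValNat (by omega)
    have hz := two_mul_lt_of_dvd_sub_one hpodd.pow (hqodd i₄) (hq2 i₄) hcong₄
    have := lt_thirteen_of_geom_sum_eqs (mul_pow_eq_geom_sum_of_Phi_eq hp hΦ3)
      (by simpa using mul_pow_eq_geom_sum_of_Phi_eq hp hΦ2)
      (by simpa using mul_pow_eq_geom_sum_of_Phi_eq hp hC') (hq2 i₁) (hq2 i₂) hz hph hcount hf₁ℓ
    omega

theorem ell_lt_thirteen
    (N p α s : ℕ) (q β : Fin s → ℕ)
    (hN : N = p ^ α * ∏ i, q i ^ (2 * β i))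
    (hodd : Odd N)
    (hperf : ArithmeticFunction.sigma 1 N = 2 * N)
    (hp : p.Prime) (hpodd : Odd p)
    (hq : ∀ i, (q i).Prime) (hqodd : ∀ i, Odd (q i))
    (hinj : Function.Injective q)
    (hpq : ∀ i, p ≠ q i)
    (hα4 : α % 4 = 1) (hp4 : p % 4 = 1)
    (hαpos : 0 < α) (hβpos : ∀ i, 0 < β i)
    (hk : ∀ i, p ^ 2 ∣ 2 * β i + 1)
    (hnd : ¬ p ^ 10 ∣ N)
    (i₁ i₂ i₃ i₄ : Fin s)
    (hij : i₁ ≠ i₂ ∧ i₁ ≠ i₃ ∧ i₁ ≠ i₄ ∧ i₂ ≠ i₃ ∧ i₂ ≠ i₄ ∧ i₃ ≠ i₄)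
    (hS : ∀ i, q i ≡ 1 [MOD p] ↔ i ∈ ({i₁, i₂, i₃, i₄} : Finset (Fin s)))
    (hβ1 : 2 * β i₁ + 1 = p ^ 2) (hβ2 : 2 * β i₂ + 1 = p ^ 2)
    (hβ3 : 2 * β i₃ + 1 = p ^ 2) (hβ4 : 2 * β i₄ + 1 = p ^ 3)
    (h₁ : ℕ) (hh₁ : 0 < h₁)
    (hΦ3 : Phi (p ^ 3) (q i₄) = p * (q i₁ : ℤ) ^ h₁)
    (hΦ12 : ∃ h₂ h₃ : ℕ, 0 < h₂ ∧ 0 < h₃ ∧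
      ((Phi p (q i₄) = p * (q i₂ : ℤ) ^ h₂ ∧ Phi (p ^ 2) (q i₄) = p * (q i₃ : ℤ) ^ h₃) ∨
       (Phi p (q i₄) = p * (q i₃ : ℤ) ^ h₃ ∧ Phi (p ^ 2) (q i₄) = p * (q i₂ : ℤ) ^ h₂)))
    (e₂ e₃ e₄ : ℕ) (he₂ : 0 < e₂) (he₃ : 0 < e₃) (he₄ : 0 < e₄) (hℓe₄ : p ∣ e₄)
    (hA : Phi p (q i₁) = p * (q i₃ : ℤ) ^ e₃)
    (hB : Phi (p ^ 2) (q i₁) = p * (q i₂ : ℤ) ^ e₂ * (q i₄ : ℤ) ^ e₄)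
    (f₁ : ℕ) (hf₁ : 0 < f₁)
    (hC : Phi p (q i₂) = p * (q i₁ : ℤ) ^ f₁)
    (hh₁ℓ : p ≤ h₁)
    (hf₁ℓ : p - 3 ≤ f₁) :
    p < 13 :=
  ell_lt_thirteen_general N p α s q β hN hperf hp hpodd hq hqodd hinj hpq i₁ i₂ i₃ i₄ hij hβ1 hβ2
    hβ4 h₁ hh₁ hΦ3 hΦ12 e₂ e₄ he₂ he₄ hB f₁ hf₁ hC hf₁ℓ
end
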